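/- Suppose an M×N real matrix Φ satisfies the RIP of order K+1 with isometry constant δ < 1/(3√K). Let x ∈ ℝ^N with ‖x‖₀ ≤ K, and let Λ ⊊ supp(x) be a proper subset of the support of x. Define x̃ ∈ ℝ^N by x̃(j) = 0 for j ∈ Λ and x̃(j) = x(j) for j ∉ Λ, and set h = A_Λᵀ A_Λ x̃. Then there exists j ∈ supp(x) \ Λ with |h(j)| strictly larger than |h(j')| for every j' ∉ supp(x) \ Λ; in particular every index maximizing |h(j)| lies in supp(x) \ Λ. -/

import Mathlib

noncomputable section

namespace OMP

open Matrix Finset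

/-- The support of a vector, as a `Finset`. -/
def supp {n : ℕ} (x : Fin n → ℝ) : Finset (Fin n) :=
  Finset.univ.filter fun j => x j ≠ 0

/-- The Euclidean (ℓ²) norm of a vector. -/
def l2 {n : ℕ} (x : Fin n → ℝ) : ℝ := Real.sqrt (∑ j, x j ^ 2)

/-- The ℓ^∞ norm of a vector. -/
def linf {n : ℕ} (x : Fin n → ℝ) : ℝ := ⨆ j, |x j|

/-- The standard inner product of two vectors. -/
def dotp {n : ℕ} (x y : Fin n → ℝ) : ℝ := ∑ j, x j * y j

/-- The restriction of a vector to a set of indices (zero elsewhere). -/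
def restr {n : ℕ} (Γ : Finset (Fin n)) (x : Fin n → ℝ) : Fin n → ℝ :=
  fun j => if j ∈ Γ then x j else 0

/-- The restricted isometry property of order `K` with isometry constant `δ`. -/
def RIP {M N : ℕ} (K : ℕ) (Φ : Matrix (Fin M) (Fin N) ℝ) (δ : ℝ) : Prop :=
  0 < δ ∧ δ < 1 ∧ ∀ x : Fin N → ℝ, (supp x).card ≤ K →
    (1 - δ) * l2 x ^ 2 ≤ l2 (Φ.mulVec x) ^ 2 ∧
      l2 (Φ.mulVec x) ^ 2 ≤ (1 + δ) * l2 x ^ 2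

/-- The span of the columns of `Φ` indexed by `Λ`, as a submodule of Euclidean space. -/
def colSpan {M N : ℕ} (Φ : Matrix (Fin M) (Fin N) ℝ) (Λ : Finset (Fin N)) :
    Submodule ℝ (EuclideanSpace ℝ (Fin M)) :=
  Submodule.span ℝ ((fun j => (WithLp.equiv 2 (Fin M → ℝ)).symm fun i => Φ i j) '' (Λ : Set (Fin N)))

/-- Orthogonal projection `P_Λ` onto the span of the columns of `Φ` indexed by `Λ`. -/
def projCol {M N : ℕ} (Φ : Matrix (Fin M) (Fin N) ℝ) (Λ : Finset (Fin N))
    (v : Fin M → ℝ) : Fin M → ℝ :=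
  WithLp.equiv 2 (Fin M → ℝ)
    (Submodule.orthogonalProjectionOnto (colSpan Φ Λ) ((WithLp.equiv 2 (Fin M → ℝ)).symm v) : EuclideanSpace ℝ (Fin M))

/-- The matrix `A_Λ = (I - P_Λ) Φ`: the columns of `Φ` orthogonalized against `colSpan Φ Λ`. -/
def Amat {M N : ℕ} (Φ : Matrix (Fin M) (Fin N) ℝ) (Λ : Finset (Fin N)) :
    Matrix (Fin M) (Fin N) ℝ :=
  Matrix.of fun i j => Φ i j - projCol Φ Λ (fun i' => Φ i' j) i

/-!
The vector `h = A_Λᵀ A_Λ x̃` is an entrywise perturbation of `x̃`. Orthogonalizing against the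
columns indexed by `Λ` only degrades the RIP constant of the remaining columns from `δ` to
`δ / (1 - δ)`: writing `P_Λ Φ w = Φ z` with `supp z ⊆ Λ`, the RIP applied to the disjointly
supported `w` and `z` forces `‖Φ z‖²` to be of order `δ² ‖w‖²`. Polarization turns this
quadratic-form bound into `|h j - x̃ j| ≤ δ / (1 - δ) ‖x̃‖₂` for `j ∉ Λ`, while `h` vanishes on `Λ`.
Since `‖x̃‖₂ ≤ √K ‖x̃‖_∞` and `2 δ √K / (1 - δ) < 1`, this error is less than half the largest
entry of `x̃`, so that entry of `h` dominates all entries outside `supp x \ Λ`.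
-/

lemma l2_nonneg {n : ℕ} (x : Fin n → ℝ) : 0 ≤ l2 x := Real.sqrt_nonneg _

lemma l2_sq {n : ℕ} (x : Fin n → ℝ) : l2 x ^ 2 = x ⬝ᵥ x := by
  rw [l2, Real.sq_sqrt (by positivity)]
  simp [dotProduct, sq]

lemma l2_eq_zero_iff {n : ℕ} {x : Fin n → ℝ} : l2 x = 0 ↔ x = 0 := by
  rw [← dotProduct_self_eq_zero, ← l2_sq, sq_eq_zero_iff]

lemma l2_single {n : ℕ} (j : Fin n) : l2 (Pi.single j 1 : Fin n → ℝ) = 1 := by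
  simp [l2, Pi.single_apply, sq]

lemma supp_subset_iff {n : ℕ} {x : Fin n → ℝ} {S : Finset (Fin n)} :
    supp x ⊆ S ↔ ∀ j ∉ S, x j = 0 := by
  simp only [supp, Finset.subset_iff, Finset.mem_filter, Finset.mem_univ, true_and]
  exact forall_congr' fun j => not_imp_comm

lemma supp_smul_add_smul_subset {n : ℕ} {u v : Fin n → ℝ} {S : Finset (Fin n)} (a b : ℝ)
    (hu : supp u ⊆ S) (hv : supp v ⊆ S) : supp (a • u + b • v) ⊆ S := by
  rw [supp_subset_iff] at *
  intro j hj
  simp [hu j hj, hv j hj]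

lemma dotProduct_eq_zero_of_disjoint_supp {n : ℕ} {u v : Fin n → ℝ}
    (huv : Disjoint (supp u) (supp v)) : u ⬝ᵥ v = 0 := by
  refine Finset.sum_eq_zero fun j _ => ?_
  by_cases hj : j ∈ supp u
  · have : v j = 0 := by simpa [supp] using Finset.disjoint_left.1 huv hj
    rw [this, mul_zero]
  · have : u j = 0 := by simpa [supp] using hj
    rw [this, zero_mul]

lemma l2_le_sqrt_card_supp_mul {n : ℕ} {x : Fin n → ℝ} {m : ℝ}
    (hm : ∀ j ∈ supp x, |x j| ≤ m) : l2 x ≤ √(supp x).card * m := by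
  obtain hx | ⟨j, hj⟩ := (supp x).eq_empty_or_nonempty
  · have : x = 0 := funext fun j => by simpa using supp_subset_iff.1 hx.subset j
    simp [this, l2, supp]
  have hm0 : 0 ≤ m := (abs_nonneg _).trans (hm j hj)
  have hsum : ∑ j ∈ supp x, x j ^ 2 = ∑ j, x j ^ 2 :=
    Finset.sum_filter_of_ne fun j _ h => by simpa using h
  calc l2 x = √(∑ j ∈ supp x, x j ^ 2) := by rw [hsum, l2]
    _ ≤ √((supp x).card * m ^ 2) := by
      refine Real.sqrt_le_sqrt ?_
      simpa using Finset.sum_le_card_nsmul _ _ _ fun j hj =>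
        sq_le_sq' (abs_le.1 (hm j hj)).1 (abs_le.1 (hm j hj)).2
    _ = √(supp x).card * m := by rw [Real.sqrt_mul (by positivity), Real.sqrt_sq hm0]

lemma mul_l2_lt_abs_apply {n K : ℕ} {v : Fin n → ℝ} {j : Fin n} {c : ℝ} (hj : j ∈ supp v)
    (hmax : ∀ i ∈ supp v, |v i| ≤ |v j|) (hK : (supp v).card ≤ K) (hc0 : 0 ≤ c)
    (hc : c * √K < 1) : c * l2 v < |v j| :=
  calc c * l2 v ≤ c * (√K * |v j|) := by
        gcongr
        exact (l2_le_sqrt_card_supp_mul hmax).trans (by gcongr)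
    _ = c * √K * |v j| := by ring
    _ < |v j| := mul_lt_of_lt_one_left (abs_pos.2 (by simpa [supp] using hj)) hc

section Polarization

variable {m n : ℕ} {A : Matrix (Fin m) (Fin n) ℝ} {S : Finset (Fin n)} {ε : ℝ}

lemma four_mul_mulVec_dotProduct_sub (p q : Fin n → ℝ) :
    4 * (A *ᵥ p ⬝ᵥ A *ᵥ q - p ⬝ᵥ q) =
      (A *ᵥ (p + q) ⬝ᵥ A *ᵥ (p + q) - (p + q) ⬝ᵥ (p + q)) -
        (A *ᵥ (p - q) ⬝ᵥ A *ᵥ (p - q) - (p - q) ⬝ᵥ (p - q)) := by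
  simp only [mulVec_add, mulVec_sub, add_dotProduct, dotProduct_add, sub_dotProduct,
    dotProduct_sub, dotProduct_comm q p, dotProduct_comm (A *ᵥ q) (A *ᵥ p)]
  ring

variable (hA : ∀ w, supp w ⊆ S → |A *ᵥ w ⬝ᵥ A *ᵥ w - w ⬝ᵥ w| ≤ ε * (w ⬝ᵥ w))
include hA

lemma four_mul_abs_mulVec_dotProduct_sub_le {p q : Fin n → ℝ} (hp : supp p ⊆ S)
    (hq : supp q ⊆ S) :
    4 * |A *ᵥ p ⬝ᵥ A *ᵥ q - p ⬝ᵥ q| ≤ 2 * ε * (p ⬝ᵥ p + q ⬝ᵥ q) := by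
  have hadd := hA (p + q) (by simpa using supp_smul_add_smul_subset 1 1 hp hq)
  have hsub := hA (p - q) (by simpa [sub_eq_add_neg] using supp_smul_add_smul_subset 1 (-1) hp hq)
  have hpar : (p + q) ⬝ᵥ (p + q) + (p - q) ⬝ᵥ (p - q) = 2 * (p ⬝ᵥ p + q ⬝ᵥ q) := by
    simp only [add_dotProduct, dotProduct_add, sub_dotProduct, dotProduct_sub]
    ring
  calc 4 * |A *ᵥ p ⬝ᵥ A *ᵥ q - p ⬝ᵥ q| = |4 * (A *ᵥ p ⬝ᵥ A *ᵥ q - p ⬝ᵥ q)| := by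
        rw [abs_mul, abs_of_pos (four_pos : (0 : ℝ) < 4)]
    _ ≤ ε * ((p + q) ⬝ᵥ (p + q)) + ε * ((p - q) ⬝ᵥ (p - q)) := by
        rw [four_mul_mulVec_dotProduct_sub]
        exact (abs_sub _ _).trans (add_le_add hadd hsub)
    _ = 2 * ε * (p ⬝ᵥ p + q ⬝ᵥ q) := by rw [← mul_add, hpar]; ring

lemma abs_mulVec_dotProduct_sub_le {u v : Fin n → ℝ} (hu : supp u ⊆ S) (hv : supp v ⊆ S) :
    |A *ᵥ u ⬝ᵥ A *ᵥ v - u ⬝ᵥ v| ≤ ε * (l2 u * l2 v) := by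
  by_cases h0 : l2 u * l2 v = 0
  · rw [h0, mul_zero]
    rcases mul_eq_zero.1 h0 with h | h <;> simp [l2_eq_zero_iff.1 h]
  have hpos : 0 < l2 u * l2 v :=
    lt_of_le_of_ne (mul_nonneg (l2_nonneg u) (l2_nonneg v)) (Ne.symm h0)
  -- rescale `u` and `v` to the same length
  have hscaled := four_mul_abs_mulVec_dotProduct_sub_le hA (p := l2 v • u) (q := l2 u • v)
    (by simpa using supp_smul_add_smul_subset (l2 v) 0 hu hu)
    (by simpa using supp_smul_add_smul_subset (l2 u) 0 hv hv)
  simp only [mulVec_smul, smul_dotProduct, dotProduct_smul, smul_eq_mul, ← l2_sq] at hscaled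
  rw [← mul_sub, ← mul_sub, abs_mul, abs_mul, abs_of_nonneg (l2_nonneg u),
    abs_of_nonneg (l2_nonneg v)] at hscaled
  refine le_of_mul_le_mul_left ?_ hpos
  linarith

lemma abs_transpose_mulVec_mulVec_apply_sub_le {j : Fin n} (hj : j ∈ S) {v : Fin n → ℝ}
    (hv : supp v ⊆ S) : |(Aᵀ *ᵥ (A *ᵥ v)) j - v j| ≤ ε * l2 v := by
  have hsingle : supp (Pi.single j 1 : Fin n → ℝ) ⊆ S :=
    supp_subset_iff.2 fun k hk => Pi.single_eq_of_ne (ne_of_mem_of_not_mem hj hk).symm 1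
  have h := abs_mulVec_dotProduct_sub_le hA hsingle hv
  have hgram : (Aᵀ *ᵥ (A *ᵥ v)) j = A.col j ⬝ᵥ A *ᵥ v := by
    simp [mulVec, dotProduct]
  rwa [l2_single, one_mul, single_one_dotProduct, mulVec_single_one, ← hgram] at h

end Polarization

section Projection

variable {M N : ℕ} (Φ : Matrix (Fin M) (Fin N) ℝ) (Λ : Finset (Fin N))

lemma projCol_eq_ofLp_starProjection (v : Fin M → ℝ) :
    projCol Φ Λ v = ((colSpan Φ Λ).starProjection (WithLp.toLp 2 v)).ofLp :=
  rfl

lemma linearCombination_col_eq_toLp_mulVec (l : Fin N →₀ ℝ) :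
    Finsupp.linearCombination ℝ (fun j => (WithLp.equiv 2 (Fin M → ℝ)).symm fun i => Φ i j) l =
      WithLp.toLp 2 (Φ *ᵥ l) := by
  ext i
  simp [Finsupp.linearCombination_apply, Finsupp.sum_fintype, mulVec, dotProduct, mul_comm]

lemma mem_colSpan_iff {p : EuclideanSpace ℝ (Fin M)} :
    p ∈ colSpan Φ Λ ↔ ∃ z, supp z ⊆ Λ ∧ WithLp.toLp 2 (Φ *ᵥ z) = p := by
  rw [colSpan, Finsupp.mem_span_image_iff_linearCombination]
  constructor
  · rintro ⟨l, hl, rfl⟩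
    exact ⟨l, supp_subset_iff.2 ((Finsupp.mem_supported' _ _).1 hl),
      (linearCombination_col_eq_toLp_mulVec Φ l).symm⟩
  · rintro ⟨z, hz, rfl⟩
    refine ⟨Finsupp.equivFunOnFinite.symm z, (Finsupp.mem_supported' _ _).2 ?_, ?_⟩
    · simpa using supp_subset_iff.1 hz
    · simpa using linearCombination_col_eq_toLp_mulVec Φ (Finsupp.equivFunOnFinite.symm z)

lemma exists_projCol_eq_mulVec (v : Fin M → ℝ) :
    ∃ z, supp z ⊆ Λ ∧ projCol Φ Λ v = Φ *ᵥ z := by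
  obtain ⟨z, hz, hpz⟩ := (mem_colSpan_iff Φ Λ).1
    ((colSpan Φ Λ).starProjection_apply_mem (WithLp.toLp 2 v))
  exact ⟨z, hz, congrArg WithLp.ofLp hpz.symm⟩

lemma sub_projCol_dotProduct_mulVec (v : Fin M → ℝ) {z : Fin N → ℝ} (hz : supp z ⊆ Λ) :
    (v - projCol Φ Λ v) ⬝ᵥ Φ *ᵥ z = 0 := by
  have h := Submodule.inner_right_of_mem_orthogonal ((mem_colSpan_iff Φ Λ).2 ⟨z, hz, rfl⟩)
    ((colSpan Φ Λ).sub_starProjection_mem_orthogonal (WithLp.toLp 2 v))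
  rw [EuclideanSpace.inner_eq_star_dotProduct] at h
  simpa [dotProduct_comm, projCol_eq_ofLp_starProjection] using h

lemma Amat_mulVec (w : Fin N → ℝ) :
    Amat Φ Λ *ᵥ w = Φ *ᵥ w - projCol Φ Λ (Φ *ᵥ w) := by
  let P : (Fin M → ℝ) →ₗ[ℝ] (Fin M → ℝ) :=
    (WithLp.linearEquiv 2 ℝ (Fin M → ℝ)).toLinearMap ∘ₗ
      (colSpan Φ Λ).starProjection.toLinearMap ∘ₗ
        (WithLp.linearEquiv 2 ℝ (Fin M → ℝ)).symm.toLinearMap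
  have hP : ∀ v, P v = projCol Φ Λ v := fun v => rfl
  have hA : Amat Φ Λ = Φ - LinearMap.toMatrix' P * Φ := by
    ext i j
    have := congrFun (mulVec_mulVec (Pi.single j 1) (LinearMap.toMatrix' P) Φ) i
    simp only [mulVec_single_one, LinearMap.toMatrix'_mulVec, hP] at this
    rw [Matrix.sub_apply, ← col_apply (LinearMap.toMatrix' P * Φ), ← this]
    rfl
  rw [hA, sub_mulVec, ← mulVec_mulVec, LinearMap.toMatrix'_mulVec, hP]

lemma Amat_mulVec_dotProduct_self (w : Fin N → ℝ) :
    Amat Φ Λ *ᵥ w ⬝ᵥ Amat Φ Λ *ᵥ w =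
      Φ *ᵥ w ⬝ᵥ Φ *ᵥ w - projCol Φ Λ (Φ *ᵥ w) ⬝ᵥ projCol Φ Λ (Φ *ᵥ w) := by
  obtain ⟨z, hz, hpz⟩ := exists_projCol_eq_mulVec Φ Λ (Φ *ᵥ w)
  have horth := sub_projCol_dotProduct_mulVec Φ Λ (Φ *ᵥ w) hz
  rw [hpz, sub_dotProduct, sub_eq_zero] at horth
  rw [Amat_mulVec, hpz]
  simp only [sub_dotProduct, dotProduct_sub, dotProduct_comm (Φ *ᵥ z) (Φ *ᵥ w), horth]
  ring

lemma Amat_apply_of_mem {j : Fin N} (hj : j ∈ Λ) (i : Fin M) : Amat Φ Λ i j = 0 := by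
  have hmem : (WithLp.equiv 2 (Fin M → ℝ)).symm (fun i' => Φ i' j) ∈ colSpan Φ Λ :=
    Submodule.subset_span ⟨j, hj, rfl⟩
  have : projCol Φ Λ (fun i' => Φ i' j) = fun i' => Φ i' j := by
    rw [projCol_eq_ofLp_starProjection]
    exact congrArg WithLp.ofLp (Submodule.starProjection_eq_self_iff.2 hmem)
  simp [Amat, this]

lemma transpose_Amat_mulVec_apply_of_mem {j : Fin N} (hj : j ∈ Λ) (w : Fin M → ℝ) :
    ((Amat Φ Λ)ᵀ *ᵥ w) j = 0 := by
  simp only [mulVec, dotProduct, transpose_apply, Amat_apply_of_mem Φ Λ hj, zero_mul,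
    Finset.sum_const_zero]

end Projection

namespace RIP

variable {M N K : ℕ} {Φ : Matrix (Fin M) (Fin N) ℝ} {δ : ℝ}

lemma abs_dotProduct_self_sub_le (hRIP : RIP K Φ δ) {w : Fin N → ℝ} (hw : (supp w).card ≤ K) :
    |Φ *ᵥ w ⬝ᵥ Φ *ᵥ w - w ⬝ᵥ w| ≤ δ * (w ⬝ᵥ w) := by
  obtain ⟨hlow, hup⟩ := hRIP.2.2 w hw
  rw [l2_sq, l2_sq] at hlow hup
  rw [abs_le]
  constructor <;> linarith

lemma abs_dotProduct_sub_le (hRIP : RIP K Φ δ) {u v : Fin N → ℝ}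
    (huv : (supp u ∪ supp v).card ≤ K) :
    |Φ *ᵥ u ⬝ᵥ Φ *ᵥ v - u ⬝ᵥ v| ≤ δ * (l2 u * l2 v) :=
  abs_mulVec_dotProduct_sub_le
    (fun _ hw => hRIP.abs_dotProduct_self_sub_le ((Finset.card_le_card hw).trans huv))
    Finset.subset_union_left Finset.subset_union_right

variable {Λ S : Finset (Fin N)}

lemma projCol_mulVec_dotProduct_self_le (hRIP : RIP K Φ δ) (hS : Disjoint S Λ)
    (hcard : S.card + Λ.card ≤ K) {w : Fin N → ℝ} (hw : supp w ⊆ S) :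
    (1 - δ) * (projCol Φ Λ (Φ *ᵥ w) ⬝ᵥ projCol Φ Λ (Φ *ᵥ w)) ≤ δ ^ 2 * (w ⬝ᵥ w) := by
  have h1δ : 0 < 1 - δ := sub_pos.2 hRIP.2.1
  obtain ⟨z, hz, hpz⟩ := exists_projCol_eq_mulVec Φ Λ (Φ *ᵥ w)
  have horth := sub_projCol_dotProduct_mulVec Φ Λ (Φ *ᵥ w) hz
  rw [hpz, sub_dotProduct, sub_eq_zero] at horth
  have hzlow := (hRIP.2.2 z ((Finset.card_le_card hz).trans (by omega))).1
  rw [l2_sq (Φ *ᵥ z)] at hzlow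
  have hP0 : 0 ≤ Φ *ᵥ z ⬝ᵥ Φ *ᵥ z := by rw [← l2_sq]; positivity
  rw [hpz]
  set P := Φ *ᵥ z ⬝ᵥ Φ *ᵥ z
  have hwz : w ⬝ᵥ z = 0 := dotProduct_eq_zero_of_disjoint_supp
    (Finset.disjoint_of_subset_left hw (Finset.disjoint_of_subset_right hz hS))
  have hcross := hRIP.abs_dotProduct_sub_le (u := w) (v := z)
    ((Finset.card_le_card (Finset.union_subset_union hw hz)).trans
      ((Finset.card_union_le _ _).trans hcard))
  rw [hwz, sub_zero, horth] at hcross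
  rcases hP0.eq_or_lt with h | h
  · rw [← h, mul_zero, ← l2_sq]
    positivity
  -- `P ≤ δ ‖w‖ ‖z‖` and `(1 - δ) ‖z‖² ≤ P` give `(1 - δ) P² ≤ δ² ‖w‖² P`
  refine le_of_mul_le_mul_right ?_ h
  calc (1 - δ) * P * P ≤ (1 - δ) * ((δ * (l2 w * l2 z)) * (δ * (l2 w * l2 z))) := by
        rw [mul_assoc]
        exact mul_le_mul_of_nonneg_left
          (mul_self_le_mul_self hP0 ((le_abs_self _).trans hcross)) h1δ.le
    _ = δ ^ 2 * l2 w ^ 2 * ((1 - δ) * l2 z ^ 2) := by ring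
    _ ≤ δ ^ 2 * l2 w ^ 2 * P := by gcongr
    _ = δ ^ 2 * (w ⬝ᵥ w) * P := by rw [l2_sq]

lemma abs_Amat_dotProduct_self_sub_le (hRIP : RIP K Φ δ) (hS : Disjoint S Λ)
    (hcard : S.card + Λ.card ≤ K) {w : Fin N → ℝ} (hw : supp w ⊆ S) :
    |Amat Φ Λ *ᵥ w ⬝ᵥ Amat Φ Λ *ᵥ w - w ⬝ᵥ w| ≤ δ / (1 - δ) * (w ⬝ᵥ w) := by
  have h1δ : 0 < 1 - δ := sub_pos.2 hRIP.2.1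
  have hproj := hRIP.projCol_mulVec_dotProduct_self_le hS hcard hw
  have hproj' : projCol Φ Λ (Φ *ᵥ w) ⬝ᵥ projCol Φ Λ (Φ *ᵥ w) ≤ δ ^ 2 * (w ⬝ᵥ w) / (1 - δ) := by
    rw [le_div_iff₀ h1δ]
    linarith
  have hproj0 : 0 ≤ projCol Φ Λ (Φ *ᵥ w) ⬝ᵥ projCol Φ Λ (Φ *ᵥ w) := by
    rw [← l2_sq]
    positivity
  have hΦw := hRIP.abs_dotProduct_self_sub_le ((Finset.card_le_card hw).trans (by omega))
  have hδ' : δ / (1 - δ) * (w ⬝ᵥ w) = δ * (w ⬝ᵥ w) + δ ^ 2 * (w ⬝ᵥ w) / (1 - δ) := by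
    field_simp
    ring
  rw [abs_le] at hΦw ⊢
  rw [Amat_mulVec_dotProduct_self, hδ']
  constructor <;> linarith

lemma abs_transpose_Amat_mulVec_Amat_mulVec_apply_sub_le (hRIP : RIP (K + 1) Φ δ)
    {v : Fin N → ℝ} (hv : Disjoint (supp v) Λ) (hcard : (supp v).card + Λ.card ≤ K) {j : Fin N}
    (hj : j ∉ Λ) : |((Amat Φ Λ)ᵀ *ᵥ (Amat Φ Λ *ᵥ v)) j - v j| ≤ δ / (1 - δ) * l2 v := by
  refine abs_transpose_mulVec_mulVec_apply_sub_le (S := insert j (supp v))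
    (fun w hw => hRIP.abs_Amat_dotProduct_self_sub_le ?_ ?_ hw) (Finset.mem_insert_self _ _)
    (Finset.subset_insert _ _)
  · exact Finset.disjoint_insert_left.2 ⟨hj, hv⟩
  · have := Finset.card_insert_le j (supp v)
    omega

end RIP

lemma two_mul_div_one_sub_mul_lt_one {δ s : ℝ} (hδ0 : 0 ≤ δ) (hs : 1 ≤ s)
    (hδ : δ < 1 / (3 * s)) : 2 * (δ / (1 - δ)) * s < 1 := by
  have h3 : δ * (3 * s) < 1 := (lt_div_iff₀ (by positivity)).1 hδ
  have hδs : δ ≤ δ * s := le_mul_of_one_le_right hδ0 hs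
  calc 2 * (δ / (1 - δ)) * s = 2 * δ * s / (1 - δ) := by ring
    _ < 1 := (div_lt_one (by linarith)).2 (by linarith)

/-- the general induction step of OMP succeeds. -/
theorem stmt6 {M N K : ℕ} (Φ : Matrix (Fin M) (Fin N) ℝ) (δ : ℝ) (x : Fin N → ℝ)
    (Λ : Finset (Fin N))
    (hRIP : RIP (K + 1) Φ δ) (hδ : δ < 1 / (3 * Real.sqrt K))
    (hsp : (supp x).card ≤ K) (hΛ : Λ ⊂ supp x)
    (xt : Fin N → ℝ) (hxt : ∀ j, xt j = if j ∈ Λ then 0 else x j)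
    (h : Fin N → ℝ) (hh : h = (Amat Φ Λ)ᵀ.mulVec ((Amat Φ Λ).mulVec xt)) :
    ∃ j ∈ supp x \ Λ, ∀ j' ∉ supp x \ Λ, |h j'| < |h j| := by
  classical
  set ε := δ / (1 - δ)
  have hε : 0 ≤ ε := div_nonneg hRIP.1.le (sub_pos.2 hRIP.2.1).le
  have hsupp_xt : supp xt = supp x \ Λ := by
    ext j
    by_cases hj : j ∈ Λ <;> simp [supp, hxt, hj]
  have hcard_xt : (supp xt).card + Λ.card ≤ K := by
    rw [hsupp_xt, card_sdiff_of_subset hΛ.1]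
    have := card_le_card hΛ.1
    omega
  have hclose : ∀ j ∉ Λ, |h j - xt j| ≤ ε * l2 xt := fun j hj =>
    hh ▸ hRIP.abs_transpose_Amat_mulVec_Amat_mulVec_apply_sub_le (hsupp_xt ▸ sdiff_disjoint)
      hcard_xt hj
  have hsmall : ∀ j ∉ supp x \ Λ, |h j| ≤ ε * l2 xt := by
    intro j hj
    by_cases hjΛ : j ∈ Λ
    · rw [hh, transpose_Amat_mulVec_apply_of_mem Φ Λ hjΛ, abs_zero]
      exact mul_nonneg hε (l2_nonneg _)
    · simpa [supp_subset_iff.1 hsupp_xt.subset j hj] using hclose j hjΛ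
  obtain ⟨jm, hjm, hmax⟩ := exists_max_image (supp xt) (fun j => |xt j|)
    (hsupp_xt ▸ sdiff_nonempty.2 (not_subset_of_ssubset hΛ))
  have hcard : (supp xt).card ≤ K := by omega
  have hK : 1 ≤ √(K : ℝ) :=
    Real.one_le_sqrt.2 (by exact_mod_cast (card_pos.2 ⟨jm, hjm⟩).trans_le hcard)
  have hgap : 2 * ε * l2 xt < |xt jm| := mul_l2_lt_abs_apply hjm hmax hcard (by positivity)
    (two_mul_div_one_sub_mul_lt_one hRIP.1.le hK hδ)
  refine ⟨jm, hsupp_xt ▸ hjm, fun j' hj' => ?_⟩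
  have := abs_sub_abs_le_abs_sub (xt jm) (h jm)
  rw [abs_sub_comm] at this
  linarith [hsmall j' hj', hclose jm (mem_sdiff.1 (hsupp_xt ▸ hjm)).2]

end OMP
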